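/- arXiv:1406.4230 — 4 statements merged into one kernel-verified Lean document; each statement's English description precedes it below -/
import Mathlib

section
/- For faces F and G of a hyperplane arrangement, the sign vector of the Tits product FG satisfies: for each hyperplane H, the sign of FG at H equals the sign of F at H if that sign is nonzero, and equals the sign of G at H otherwise. -/
lemma aux_sign (a b : ℝ) : ∃ ε > (0:ℝ), ∀ t ∈ Set.Ioo (0:ℝ) ε,
    Real.sign ((1 - t) * a + t * b) =
      if Real.sign a ≠ 0 then Real.sign a else Real.sign b := by
  rcases lt_trichotomy a 0 with ha | ha | ha
  · refine ⟨|a| / (|b - a| + 1), div_pos (abs_pos.mpr (by intro h; simp [h] at ha)) (by positivity), fun t ht => ?_⟩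
    have hlt : |t * (b - a)| < |a| := by
      rw [abs_mul, abs_of_pos ht.1]
      calc t * |b - a| ≤ t * (|b - a| + 1) := by nlinarith [ht.1.le]
        _ < |a| / (|b - a| + 1) * (|b - a| + 1) := by
            apply mul_lt_mul_of_pos_right ht.2; positivity
        _ = |a| := by field_simp
    have hneg : (1 - t) * a + t * b < 0 := by
      have := abs_lt.mp hlt
      rw [abs_of_neg ha] at this
      nlinarith [this.1, this.2]
    rw [Real.sign_of_neg hneg, Real.sign_of_neg ha, if_pos (by norm_num)]
  · subst ha
    refine ⟨1, one_pos, fun t ht => ?_⟩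
    simp only [Real.sign_zero, ne_eq, not_true_eq_false, if_false, mul_zero, add_zero, zero_add]
    rcases lt_trichotomy b 0 with hb | hb | hb
    · rw [Real.sign_of_neg hb, Real.sign_of_neg (by nlinarith [ht.1])]
    · simp [hb]
    · rw [Real.sign_of_pos hb, Real.sign_of_pos (by nlinarith [ht.1])]
  · refine ⟨|a| / (|b - a| + 1), div_pos (abs_pos.mpr (by intro h; simp [h] at ha)) (by positivity), fun t ht => ?_⟩
    have hlt : |t * (b - a)| < |a| := by
      rw [abs_mul, abs_of_pos ht.1]
      calc t * |b - a| ≤ t * (|b - a| + 1) := by nlinarith [ht.1.le]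
        _ < |a| / (|b - a| + 1) * (|b - a| + 1) := by
            apply mul_lt_mul_of_pos_right ht.2; positivity
        _ = |a| := by field_simp
    have hpos : (1 - t) * a + t * b > 0 := by
      have := abs_lt.mp hlt
      rw [abs_of_pos ha] at this
      nlinarith [this.1, this.2]
    rw [Real.sign_of_pos hpos, Real.sign_of_pos ha, if_pos (by norm_num)]

/-- **Sign vector of the Tits product.**
Let `f i` (for `i` in a finite index set) be the affine functionals defining a hyperplane
arrangement in a real vector space `V`.  Faces are determined by sign vectors: the sign of a
face at the hyperplane `i` is the sign of `f i` at any of its points.  Traveling from a point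
`x` (of a face `F`) a small positive distance toward a point `y` (of a face `G`), one enters
the face `FG`, and for each hyperplane `i` the sign of `FG` at `i` equals the sign of `F` at
`i` if that sign is nonzero, and the sign of `G` at `i` otherwise. -/
theorem sign_vector_of_tits_product
    {V : Type*} [AddCommGroup V] [Module ℝ V] {ι : Type*} [Finite ι]
    (f : ι → (V →ᵃ[ℝ] ℝ)) (x y : V) :
    ∃ ε > (0 : ℝ), ∀ t ∈ Set.Ioo (0 : ℝ) ε, ∀ i : ι,
      Real.sign (f i ((1 - t) • x + t • y)) =
        if Real.sign (f i x) ≠ 0 then Real.sign (f i x) else Real.sign (f i y) := by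
  classical
  have key : ∀ i : ι, ∃ ε > (0:ℝ), ∀ t ∈ Set.Ioo (0:ℝ) ε,
      Real.sign (f i ((1 - t) • x + t • y)) =
        if Real.sign (f i x) ≠ 0 then Real.sign (f i x) else Real.sign (f i y) := by
    intro i
    obtain ⟨ε, hε, h⟩ := aux_sign (f i x) (f i y)
    refine ⟨ε, hε, fun t ht => ?_⟩
    have heval : f i ((1 - t) • x + t • y) = (1 - t) * f i x + t * f i y := by
      have : (1 - t) • x + t • y = AffineMap.lineMap x y t := by
        rw [AffineMap.lineMap_apply_module]
      rw [this, AffineMap.apply_lineMap, AffineMap.lineMap_apply_module]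
      simp [smul_eq_mul]
    rw [heval]; exact h t ht
  choose ε hε hP using key
  have := Fintype.ofFinite ι
  by_cases h : Nonempty ι
  · have hne : (Finset.univ : Finset ι).Nonempty := Finset.univ_nonempty
    refine ⟨Finset.univ.inf' hne ε, ?_, fun t ht i => ?_⟩
    · exact (Finset.lt_inf'_iff hne).mpr fun i _ => hε i
    · exact hP i t ⟨ht.1, lt_of_lt_of_le ht.2 (Finset.inf'_le _ (Finset.mem_univ i))⟩
  · exact ⟨1, one_pos, fun t ht i => absurd ⟨i⟩ h⟩
end

section
/- If the intersection of all hyperplanes of a finite arrangement is nonempty, then this intersection is a face which is a two-sided identity element for the Tits product, so the set of faces is a monoid. -/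
/-- The Tits product of faces of a hyperplane arrangement, described on sign vectors
(with values the signs of the defining affine functionals):
`σ_H(FG) = σ_H(F)` if `σ_H(F) ≠ 0`, and `σ_H(G)` otherwise. -/
noncomputable def titsProd {ι : Type*} (F G : ι → ℝ) : ι → ℝ :=
  fun i => if F i ≠ 0 then F i else G i

/-- The sign vector of a point `x` for the arrangement given by affine functionals `f`. -/
noncomputable def signVec {V ι : Type*} [AddCommGroup V] [Module ℝ V]
    (f : ι → (V →ᵃ[ℝ] ℝ)) (x : V) : ι → ℝ :=
  fun i => Real.sign (f i x)

/-- **The central face is a unit.** If the intersection of all the hyperplanes of a finite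
arrangement is nonempty (it contains a point `x₀`), then this intersection is a face — the
one whose sign vector is identically zero, namely the sign vector of `x₀` — and it is a
two-sided identity element for the Tits product; hence the set of faces is a monoid. -/
theorem central_face_is_unit {V ι : Type*} [AddCommGroup V] [Module ℝ V] [Finite ι]
    (f : ι → (V →ᵃ[ℝ] ℝ)) (x₀ : V) (h : ∀ i, f i x₀ = 0) :
    (signVec f x₀ = fun _ => 0) ∧
    ∀ x : V, titsProd (signVec f x₀) (signVec f x) = signVec f x ∧
      titsProd (signVec f x) (signVec f x₀) = signVec f x := by
  have h0 : signVec f x₀ = fun _ => 0 := by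
    funext i; simp [signVec, h i, Real.sign_zero]
  refine ⟨h0, fun x => ⟨?_, ?_⟩⟩
  · funext i; simp [titsProd, h0]
  · funext i; simp only [titsProd, h0]
    split <;> simp_all
end

section
/- Let F be a face of the finite Coxeter complex of a root system Φ with Weyl group W. Then there is a unique w ∈ W such that F = w · C_J (where J = Δ \ col(F)) and D(w) ⊆ col(F); this w is the unique element with w · C_∅ = F C_∅ (the Tits projection of F onto the fundamental chamber). -/
/-! Every element of the Weyl group is a product of simple reflections (a minimal positive root
`β` with `s_β` not such a product is lowered by a simple reflection), and the exchange condition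
holds: if `w = s_{α₁} ⋯ s_{αₙ}` sends the simple root `α` to a negative root, then `w s_α` is a
product of `n - 1` simple reflections. As the `s_α` with `α ∈ J` fix `C_J` pointwise, removing
descents in `J` from `w₀` terminates in some `w` with `w · C_J = F` and `D(w) ⊆ Δ \ J`.
For such `w` the roots `w α`, `α ∈ J`, are positive, so the forms `⟪·, w α⟫` vanishing on `F`
are positive on `C_∅`, and a short walk from `F` towards `C_∅` enters `w · C_∅`. The chambers
`w · C_∅` are pairwise disjoint: an element of the Weyl group mapping a point of `C_∅` into
`C_∅` sends every simple root to a positive root, hence is trivial by the exchange condition.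
This gives uniqueness and the characterisation by the Tits projection at once. -/

open scoped RealInnerProductSpace Classical

noncomputable section

variable (V : Type*) [NormedAddCommGroup V] [InnerProductSpace ℝ V] [FiniteDimensional ℝ V]

/-- The orthogonal reflection through the hyperplane orthogonal to `β`. -/
def sRefl (β : V) : V ≃ₗᵢ[ℝ] V := Submodule.reflection ((ℝ ∙ β)ᗮ)

/-- `β` is a nonnegative linear combination of the elements of `Δ`. -/
def IsNonneg (Δ : Finset V) (β : V) : Prop :=
  ∃ c : V → ℝ, (∀ α, 0 ≤ c α) ∧ β = ∑ α ∈ Δ, c α • α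

/-- Root system axioms with simple system `Δ`. -/
structure IsRootSystem (Φ Δ : Finset V) : Prop where
  subset : Δ ⊆ Φ
  nonzero : (0 : V) ∉ Φ
  neg_mem : ∀ β ∈ Φ, -β ∈ Φ
  refl_mem : ∀ α ∈ Φ, ∀ β ∈ Φ, sRefl V α β ∈ Φ
  indep : LinearIndependent ℝ (fun α : Δ => (α : V))
  pos_or_neg : ∀ β ∈ Φ, IsNonneg V Δ β ∨ IsNonneg V Δ (-β)

/-- The Weyl group: the subgroup generated by the reflections in the roots. -/
def Weyl (Φ : Finset V) : Subgroup (V ≃ₗᵢ[ℝ] V) :=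
  Subgroup.closure {g | ∃ β ∈ Φ, g = sRefl V β}

/-- Length with respect to the simple reflections. -/
def len (Δ : Finset V) (w : V ≃ₗᵢ[ℝ] V) : ℕ :=
  sInf {k | ∃ l : List V, l.length = k ∧ (∀ α ∈ l, α ∈ Δ) ∧ (l.map (sRefl V)).prod = w}

/-- Descent set of `w`. -/
def Dset (Δ : Finset V) (w : V ≃ₗᵢ[ℝ] V) : Finset V :=
  Δ.filter fun α => IsNonneg V Δ (-(w α))

/-- `θ` is the highest root. -/
def IsHighest (Φ Δ : Finset V) (θ : V) : Prop :=
  θ ∈ Φ ∧ IsNonneg V Δ θ ∧ ∀ β ∈ Φ, IsNonneg V Δ β → IsNonneg V Δ (θ - β)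

def Crystallographic (Φ : Finset V) : Prop :=
  ∀ α ∈ Φ, ∀ β ∈ Φ, ∃ n : ℤ, 2 * (inner ℝ β α : ℝ) = (n : ℝ) * (inner ℝ α α : ℝ)

def IrreducibleSystem (Δ : Finset V) : Prop :=
  ∀ s ⊆ Δ, (∀ α ∈ s, ∀ β ∈ Δ, β ∉ s → (inner ℝ α β : ℝ) = 0) → s = ∅ ∨ s = Δ

/-- Affine descent set of `w`, relative to the highest root `θ`. -/
def Dtilde (Δ : Finset V) (θ : V) (w : V ≃ₗᵢ[ℝ] V) : Finset V :=
  (insert (-θ) Δ).filter fun α => IsNonneg V Δ (-(w α))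

/-- The descent-algebra basis element `x_J`. -/
def xJ (Φ Δ J : Finset V) : MonoidAlgebra ℤ (Weyl V Φ) :=
  ∑ᶠ w : Weyl V Φ, if Dset V Δ (w : V ≃ₗᵢ[ℝ] V) ⊆ J then MonoidAlgebra.single w 1 else 0

/-- The affine analogue `x̃_K`. -/
def xT (Φ Δ : Finset V) (θ : V) (K : Finset V) : MonoidAlgebra ℤ (Weyl V Φ) :=
  ∑ᶠ w : Weyl V Φ, if Dtilde V Δ θ (w : V ≃ₗᵢ[ℝ] V) ⊆ K then MonoidAlgebra.single w 1 else 0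

def yJ (Φ Δ J : Finset V) : MonoidAlgebra ℤ (Weyl V Φ) :=
  ∑ᶠ w : Weyl V Φ, if Dset V Δ (w : V ≃ₗᵢ[ℝ] V) = J then MonoidAlgebra.single w 1 else 0

def yT (Φ Δ : Finset V) (θ : V) (K : Finset V) : MonoidAlgebra ℤ (Weyl V Φ) :=
  ∑ᶠ w : Weyl V Φ, if Dtilde V Δ θ (w : V ≃ₗᵢ[ℝ] V) = K then MonoidAlgebra.single w 1 else 0

/-- The face `C_J` of the fundamental chamber of the Coxeter arrangement:
`⟪λ,α⟫ = 0` for `α ∈ J` and `⟪λ,α⟫ > 0` for `α ∈ Δ \\ J`. -/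
def CJ (Δ J : Finset V) : Set V :=
  {x | (∀ α ∈ J, (inner ℝ x α : ℝ) = 0) ∧ ∀ α ∈ Δ, α ∉ J → 0 < (inner ℝ x α : ℝ)}

end

open Filter Topology

section Reflections

variable {V : Type*} [NormedAddCommGroup V] [InnerProductSpace ℝ V]

theorem sRefl_apply (β x : V) : sRefl V β x = x - (2 * ⟪x, β⟫ / ‖β‖ ^ 2) • β := by
  rw [sRefl, Submodule.reflection_orthogonal_apply, Submodule.reflection_singleton_apply,
    real_inner_comm]
  simp only [RCLike.ofReal_real_eq_id, id_eq]
  module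

theorem sRefl_apply_of_inner_eq_zero {β x : V} (hx : ⟪x, β⟫ = 0) : sRefl V β x = x := by
  simp [sRefl_apply, hx]

theorem sRefl_apply_self (β : V) : sRefl V β β = -β :=
  Submodule.reflection_orthogonalComplement_singleton_eq_neg β

theorem sRefl_mul_self (β : V) : sRefl V β * sRefl V β = 1 :=
  Submodule.reflection_mul_reflection _

@[simp] theorem sRefl_inv (β : V) : (sRefl V β)⁻¹ = sRefl V β := rfl

theorem sRefl_smul {c : ℝ} (hc : c ≠ 0) (β : V) : sRefl V (c • β) = sRefl V β := by
  simp only [sRefl, Submodule.span_singleton_smul_eq (IsUnit.mk0 c hc)]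

theorem sRefl_neg (β : V) : sRefl V (-β) = sRefl V β := by
  rw [← neg_one_smul ℝ β, sRefl_smul (by norm_num)]

theorem sRefl_map (w : V ≃ₗᵢ[ℝ] V) (β : V) : sRefl V (w β) = w * sRefl V β * w⁻¹ := by
  ext x
  have hx : ⟪x, w β⟫ = ⟪w.symm x, β⟫ := by
    rw [← w.inner_map_map (w.symm x), w.apply_symm_apply]
  change _ = w (sRefl V β (w.symm x))
  rw [sRefl_apply, sRefl_apply, map_sub, map_smul, w.apply_symm_apply, hx, w.norm_map]

noncomputable def wordProd (l : List V) : V ≃ₗᵢ[ℝ] V := (l.map (sRefl V)).prod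

@[simp] theorem wordProd_nil : wordProd ([] : List V) = 1 := rfl

@[simp] theorem wordProd_cons (a : V) (l : List V) :
    wordProd (a :: l) = sRefl V a * wordProd l := List.prod_cons

@[simp] theorem wordProd_append (l₁ l₂ : List V) :
    wordProd (l₁ ++ l₂) = wordProd l₁ * wordProd l₂ := by
  simp [wordProd]

theorem wordProd_concat (l : List V) (a : V) :
    wordProd (l ++ [a]) = wordProd l * sRefl V a := by
  simp

theorem wordProd_reverse (l : List V) : wordProd l.reverse = (wordProd l)⁻¹ := by
  induction l with
  | nil => simp
  | cons a l ih => simp [ih]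

end Reflections

section Positivity

variable {V : Type*} [NormedAddCommGroup V] [InnerProductSpace ℝ V] {Δ : Finset V}

theorem isNonneg_of_mem {α : V} (hα : α ∈ Δ) : IsNonneg V Δ α :=
  ⟨fun γ => if γ = α then 1 else 0, fun γ => by positivity, by simp [ite_smul, hα]⟩

theorem inner_pos_of_isNonneg {β x : V} (hβ : β ≠ 0) (hp : IsNonneg V Δ β)
    (hx : ∀ α ∈ Δ, 0 < ⟪x, α⟫) : 0 < ⟪x, β⟫ := by
  obtain ⟨c, hc, rfl⟩ := hp
  obtain ⟨α, hα, hcα⟩ : ∃ α ∈ Δ, c α ≠ 0 := by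
    by_contra! hzero
    exact hβ (Finset.sum_eq_zero fun α hα => by rw [hzero α hα, zero_smul])
  simp only [inner_sum, real_inner_smul_right]
  exact Finset.sum_pos' (fun γ hγ => mul_nonneg (hc γ) (hx γ hγ).le)
    ⟨α, hα, mul_pos ((hc α).lt_of_ne' hcα) (hx α hα)⟩

theorem exists_mem_inner_pos_of_isNonneg {β : V} (hβ : β ≠ 0) (hp : IsNonneg V Δ β) :
    ∃ α ∈ Δ, 0 < ⟪β, α⟫ := by
  obtain ⟨c, hc, hcβ⟩ := hp
  have hsum : (∑ _α ∈ Δ, (0 : ℝ)) < ∑ α ∈ Δ, c α * ⟪β, α⟫ := by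
    have hββ := real_inner_self_pos.mpr hβ
    nth_rewrite 2 [hcβ] at hββ
    simpa only [inner_sum, real_inner_smul_right, Finset.sum_const_zero] using hββ
  obtain ⟨α, hα, hpos⟩ := Finset.exists_lt_of_sum_lt hsum
  exact ⟨α, hα, pos_of_mul_pos_right hpos (hc α)⟩

variable (hΔ : LinearIndependent ℝ (fun α : Δ => (α : V)))
include hΔ

theorem coeff_eq_zero_of_sum_smul_eq_zero {c : V → ℝ} (hc : ∑ α ∈ Δ, c α • α = 0) :
    ∀ α ∈ Δ, c α = 0 := fun α hα =>
  Fintype.linearIndependent_iff.mp hΔ (fun α : Δ => c α)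
    (by rwa [Finset.sum_coe_sort Δ (fun α => c α • α)]) ⟨α, hα⟩

theorem eq_zero_of_isNonneg_of_isNonneg_neg {β : V} (h₁ : IsNonneg V Δ β)
    (h₂ : IsNonneg V Δ (-β)) : β = 0 := by
  obtain ⟨c, hc, rfl⟩ := h₁
  obtain ⟨d, hd, hcd⟩ := h₂
  have hsum : ∑ α ∈ Δ, (c α + d α) • α = 0 := by
    simp only [add_smul, Finset.sum_add_distrib, ← hcd, add_neg_cancel]
  refine Finset.sum_eq_zero fun α hα => ?_
  have := coeff_eq_zero_of_sum_smul_eq_zero hΔ hsum α hα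
  rw [show c α = 0 by linarith [hc α, hd α], zero_smul]

theorem sRefl_eq_of_isNonneg_neg_sRefl {α β : V} (hα : α ∈ Δ) (hβ : β ≠ 0)
    (h₁ : IsNonneg V Δ β) (h₂ : IsNonneg V Δ (-(sRefl V α β))) : sRefl V β = sRefl V α := by
  set t := 2 * ⟪β, α⟫ / ‖α‖ ^ 2
  obtain ⟨c, hc, rfl⟩ := h₁
  obtain ⟨d, hd, hcd⟩ := h₂
  have hsum : ∑ γ ∈ Δ, (c γ + d γ - if γ = α then t else 0) • γ = 0 := by
    simp only [sub_smul, add_smul, Finset.sum_sub_distrib, Finset.sum_add_distrib, ← hcd,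
      ite_smul, zero_smul, Finset.sum_ite_eq' Δ α, if_pos hα, sRefl_apply]
    abel
  have hcoeff : ∀ γ ∈ Δ, γ ≠ α → c γ = 0 := fun γ hγ hγα => by
    have := coeff_eq_zero_of_sum_smul_eq_zero hΔ hsum γ hγ
    rw [if_neg hγα] at this
    linarith [hc γ, hd γ]
  have hβα : ∑ γ ∈ Δ, c γ • γ = c α • α :=
    Finset.sum_eq_single_of_mem α hα fun γ hγ hγα => by rw [hcoeff γ hγ hγα, zero_smul]
  rw [hβα] at hβ ⊢
  exact sRefl_smul (left_ne_zero_of_smul hβ) α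

theorem exists_inner_eq (c : V → ℝ) : ∃ x : V, ∀ α ∈ Δ, ⟪x, α⟫ = c α := by
  let b := Module.Basis.span hΔ
  have := Module.Finite.of_basis b
  let f := LinearMap.toContinuousLinearMap (b.constr ℝ fun α => c α)
  let x := (InnerProductSpace.toDual ℝ (Submodule.span ℝ (Set.range fun α : Δ => (α : V)))).symm f
  refine ⟨x, fun α hα => ?_⟩
  calc ⟪(x : V), α⟫ = ⟪x, b ⟨α, hα⟩⟫ := by simp [b]
    _ = f (b ⟨α, hα⟩) := InnerProductSpace.toDual_symm_apply
    _ = c α := by simp [f]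

end Positivity

def simpleWeyl {V : Type*} [NormedAddCommGroup V] [InnerProductSpace ℝ V] (Δ : Finset V) :
    Subgroup (V ≃ₗᵢ[ℝ] V) :=
  Subgroup.closure {g | ∃ α ∈ Δ, g = sRefl V α}

theorem exists_wordProd_eq_of_mem_simpleWeyl {V : Type*} [NormedAddCommGroup V]
    [InnerProductSpace ℝ V] {Δ : Finset V} {w : V ≃ₗᵢ[ℝ] V} (hw : w ∈ simpleWeyl Δ) :
    ∃ l : List V, (∀ α ∈ l, α ∈ Δ) ∧ wordProd l = w := by
  induction hw using Subgroup.closure_induction with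
  | mem g hg =>
    obtain ⟨α, hα, rfl⟩ := hg
    exact ⟨[α], by simpa using hα, by simp⟩
  | one => exact ⟨[], by simp, rfl⟩
  | mul a b _ _ iha ihb =>
    obtain ⟨la, hla, rfl⟩ := iha
    obtain ⟨lb, hlb, rfl⟩ := ihb
    exact ⟨la ++ lb, fun γ hγ => (List.mem_append.mp hγ).elim (hla γ) (hlb γ), by simp⟩
  | inv a _ iha =>
    obtain ⟨la, hla, rfl⟩ := iha
    exact ⟨la.reverse, fun γ hγ => hla γ (List.mem_reverse.mp hγ), wordProd_reverse la⟩

section Faces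

variable {V : Type*} [NormedAddCommGroup V] [InnerProductSpace ℝ V] {Δ J : Finset V}

theorem CJ_nonempty (hΔ : LinearIndependent ℝ (fun α : Δ => (α : V))) (hJ : J ⊆ Δ) :
    (CJ V Δ J).Nonempty := by
  obtain ⟨x, hx⟩ := exists_inner_eq hΔ fun α => if α ∈ J then 0 else 1
  exact ⟨x, fun α hα => by simp [hx α (hJ hα), hα], fun α hα hαJ => by simp [hx α hα, hαJ]⟩

theorem image_CJ_mul_sRefl (w : V ≃ₗᵢ[ℝ] V) {α : V} (hα : α ∈ J) :
    ⇑(w * sRefl V α) '' CJ V Δ J = ⇑w '' CJ V Δ J := by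
  rw [LinearIsometryEquiv.coe_mul, Set.image_comp,
    Set.EqOn.image_eq_self (f := sRefl V α) fun x hx => sRefl_apply_of_inner_eq_zero (hx.1 α hα)]

theorem mem_CJ_empty_iff {x : V} : x ∈ CJ V Δ ∅ ↔ ∀ α ∈ Δ, 0 < ⟪x, α⟫ := by
  simp [CJ]

theorem mem_image_CJ_empty_iff {w : V ≃ₗᵢ[ℝ] V} {z : V} :
    z ∈ ⇑w '' CJ V Δ ∅ ↔ ∀ α ∈ Δ, 0 < ⟪z, w α⟫ := by
  constructor
  · rintro ⟨x, hx, rfl⟩ α hα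
    rw [w.inner_map_map]
    exact mem_CJ_empty_iff.mp hx α hα
  · refine fun hz => ⟨w.symm z, mem_CJ_empty_iff.mpr fun α hα => ?_, w.apply_symm_apply z⟩
    rw [← w.inner_map_map, w.apply_symm_apply]
    exact hz α hα

theorem eventually_inner_pos_segment {ι : Type*} (s : Finset ι) (v : ι → V) {x y : V}
    (hs : ∀ i ∈ s, 0 < ⟪x, v i⟫ ∨ ⟪x, v i⟫ = 0 ∧ 0 < ⟪y, v i⟫) :
    ∀ᶠ t in 𝓝[>] (0 : ℝ), ∀ i ∈ s, 0 < ⟪(1 - t) • x + t • y, v i⟫ := by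
  rw [eventually_all_finset]
  intro i hi
  simp only [inner_add_left, real_inner_smul_left]
  rcases hs i hi with hx | ⟨hx, hy⟩
  · have hcont : Tendsto (fun t : ℝ => (1 - t) * ⟪x, v i⟫ + t * ⟪y, v i⟫) (𝓝 0)
        (𝓝 ⟪x, v i⟫) := by
      have : Continuous fun t : ℝ => (1 - t) * ⟪x, v i⟫ + t * ⟪y, v i⟫ := by fun_prop
      simpa using this.tendsto 0
    exact nhdsWithin_le_nhds (hcont.eventually (lt_mem_nhds hx))
  · filter_upwards [self_mem_nhdsWithin] with t (ht : 0 < t)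
    simpa [hx] using mul_pos ht hy

end Faces

namespace IsRootSystem

variable {V : Type*} [NormedAddCommGroup V] [InnerProductSpace ℝ V] {Φ Δ : Finset V}
  (h : IsRootSystem V Φ Δ)
include h

theorem ne_zero {β : V} (hβ : β ∈ Φ) : β ≠ 0 := fun h0 => h.nonzero (h0 ▸ hβ)

theorem isNonneg_neg_iff {β : V} (hβ : β ∈ Φ) : IsNonneg V Δ (-β) ↔ ¬ IsNonneg V Δ β :=
  ⟨fun hn hp => h.ne_zero hβ (eq_zero_of_isNonneg_of_isNonneg_neg h.indep hp hn),
    (h.pos_or_neg β hβ).resolve_left⟩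

theorem wordProd_apply_mem {l : List V} (hl : ∀ α ∈ l, α ∈ Δ) {β : V} (hβ : β ∈ Φ) :
    wordProd l β ∈ Φ := by
  induction l with
  | nil => exact hβ
  | cons a l ih =>
    exact h.refl_mem a (h.subset (hl a List.mem_cons_self)) _
      (ih fun γ hγ => hl γ (List.mem_cons_of_mem a hγ))

theorem wordProd_mem_weyl {l : List V} (hl : ∀ α ∈ l, α ∈ Δ) : wordProd l ∈ Weyl V Φ := by
  induction l with
  | nil => exact one_mem _
  | cons a l ih =>
    exact mul_mem (Subgroup.subset_closure ⟨a, h.subset (hl a List.mem_cons_self), rfl⟩)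
      (ih fun γ hγ => hl γ (List.mem_cons_of_mem a hγ))

theorem exists_wordProd_eq_mul_sRefl {l : List V} (hl : ∀ α ∈ l, α ∈ Δ) {α : V} (hα : α ∈ Δ)
    (hneg : IsNonneg V Δ (-(wordProd l α))) :
    ∃ l' : List V, (∀ γ ∈ l', γ ∈ Δ) ∧ l'.length < l.length ∧
      wordProd l' = wordProd l * sRefl V α := by
  induction l with
  | nil =>
    exact absurd (isNonneg_of_mem hα) ((h.isNonneg_neg_iff (h.subset hα)).mp hneg)
  | cons a l ih =>
    have ha : a ∈ Δ := hl a List.mem_cons_self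
    have hl' : ∀ γ ∈ l, γ ∈ Δ := fun γ hγ => hl γ (List.mem_cons_of_mem a hγ)
    by_cases hneg' : IsNonneg V Δ (-(wordProd l α))
    · obtain ⟨l', hl'Δ, hlen, hprod⟩ := ih hl' hneg'
      refine ⟨a :: l', ?_, by simpa using hlen, by simp [hprod, mul_assoc]⟩
      exact List.forall_mem_cons.mpr ⟨ha, hl'Δ⟩
    · -- `s_a` sends the positive root `β = wordProd l α` to a negative root, so `s_β = s_a`,
      -- and then `s_a * wordProd l = wordProd l * s_α`
      have hβ : wordProd l α ∈ Φ := h.wordProd_apply_mem hl' (h.subset hα)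
      have hpos := (h.pos_or_neg _ hβ).resolve_right hneg'
      have hsa : sRefl V (wordProd l α) = sRefl V a :=
        sRefl_eq_of_isNonneg_neg_sRefl h.indep ha (h.ne_zero hβ) hpos hneg
      refine ⟨l, hl', by simp, ?_⟩
      rw [wordProd_cons, ← hsa, sRefl_map, inv_mul_cancel_right, mul_assoc, sRefl_mul_self,
        mul_one]

theorem wordProd_eq_one {l : List V} (hl : ∀ α ∈ l, α ∈ Δ)
    (hpos : ∀ α ∈ Δ, IsNonneg V Δ (wordProd l α)) : wordProd l = 1 := by
  induction hn : l.length using Nat.strong_induction_on generalizing l with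
  | _ n ih =>
    rcases l.eq_nil_or_concat' with rfl | ⟨l', a, rfl⟩
    · rfl
    have ha : a ∈ Δ := hl a (by simp)
    have hl' : ∀ γ ∈ l', γ ∈ Δ := fun γ hγ => hl γ (by simp [hγ])
    have hneg : IsNonneg V Δ (-(wordProd l' a)) := by
      simpa [wordProd_concat, sRefl_apply_self] using hpos a ha
    obtain ⟨l₂, hl₂, hlen, hprod⟩ := h.exists_wordProd_eq_mul_sRefl hl' ha hneg
    rw [← wordProd_concat] at hprod
    rw [← hprod] at hpos ⊢
    exact ih l₂.length (by simp only [List.length_append, List.length_singleton] at hn; omega)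
      hl₂ hpos rfl

theorem exists_sRefl_eq_or_lt {β : V} (hβ : β ∈ Φ) (hp : IsNonneg V Δ β) :
    ∃ α ∈ Δ, sRefl V β = sRefl V α ∨ (IsNonneg V Δ (sRefl V α β) ∧
      ∀ x : V, (∀ γ ∈ Δ, 0 < ⟪x, γ⟫) → ⟪x, sRefl V α β⟫ < ⟪x, β⟫) := by
  obtain ⟨α, hα, hβα⟩ := exists_mem_inner_pos_of_isNonneg (h.ne_zero hβ) hp
  refine ⟨α, hα, ?_⟩
  by_cases hpos : IsNonneg V Δ (sRefl V α β)
  · refine Or.inr ⟨hpos, fun x hx => ?_⟩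
    have ht : 0 < 2 * ⟪β, α⟫ / ‖α‖ ^ 2 := by
      have := norm_pos_iff.mpr (h.ne_zero (h.subset hα))
      positivity
    rw [sRefl_apply, inner_sub_right, real_inner_smul_right, sub_lt_self_iff]
    exact mul_pos ht (hx α hα)
  · have hneg := (h.isNonneg_neg_iff (h.refl_mem α (h.subset hα) β hβ)).mpr hpos
    exact Or.inl (sRefl_eq_of_isNonneg_neg_sRefl h.indep hα (h.ne_zero hβ) hp hneg)

theorem sRefl_mem_simpleWeyl_of_isNonneg {β : V} (hβ : β ∈ Φ) (hp : IsNonneg V Δ β) :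
    sRefl V β ∈ simpleWeyl Δ := by
  obtain ⟨x₀, hx₀⟩ := exists_inner_eq h.indep fun _ => 1
  have hx₀pos : ∀ α ∈ Δ, 0 < ⟪x₀, α⟫ := fun α hα => by simp [hx₀ α hα]
  by_contra hβW
  obtain ⟨β, hβB, hmin⟩ := Finset.exists_min_image
    (Φ.filter fun β => IsNonneg V Δ β ∧ sRefl V β ∉ simpleWeyl Δ) (fun β => ⟪x₀, β⟫)
    ⟨β, Finset.mem_filter.mpr ⟨hβ, hp, hβW⟩⟩
  obtain ⟨hβ, hp, hβW⟩ := Finset.mem_filter.mp hβB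
  obtain ⟨α, hα, hsα | ⟨hγ, hlt⟩⟩ := h.exists_sRefl_eq_or_lt hβ hp
  · exact hβW (hsα ▸ Subgroup.subset_closure ⟨α, hα, rfl⟩)
  · have hγW : sRefl V (sRefl V α β) ∈ simpleWeyl Δ := by
      by_contra hγW
      exact (hlt x₀ hx₀pos).not_ge
        (hmin _ (Finset.mem_filter.mpr ⟨h.refl_mem α (h.subset hα) β hβ, hγ, hγW⟩))
    have hαW : sRefl V α ∈ simpleWeyl Δ := Subgroup.subset_closure ⟨α, hα, rfl⟩
    -- `s_β = s_α s_{s_α β} s_α`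
    rw [sRefl_map, sRefl_inv] at hγW
    apply hβW
    simpa [mul_assoc, ← mul_assoc (sRefl V α) (sRefl V α), sRefl_mul_self] using
      mul_mem (mul_mem hαW hγW) hαW

theorem weyl_le_simpleWeyl : Weyl V Φ ≤ simpleWeyl Δ := by
  rw [Weyl, Subgroup.closure_le]
  rintro _ ⟨β, hβ, rfl⟩
  rcases h.pos_or_neg β hβ with hp | hn
  · exact h.sRefl_mem_simpleWeyl_of_isNonneg hβ hp
  · simpa [sRefl_neg] using h.sRefl_mem_simpleWeyl_of_isNonneg (h.neg_mem β hβ) hn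

theorem exists_wordProd_eq {w : V ≃ₗᵢ[ℝ] V} (hw : w ∈ Weyl V Φ) :
    ∃ l : List V, (∀ α ∈ l, α ∈ Δ) ∧ wordProd l = w :=
  exists_wordProd_eq_of_mem_simpleWeyl (h.weyl_le_simpleWeyl hw)

theorem weyl_apply_mem {w : V ≃ₗᵢ[ℝ] V} (hw : w ∈ Weyl V Φ) {β : V} (hβ : β ∈ Φ) :
    w β ∈ Φ := by
  obtain ⟨l, hl, rfl⟩ := h.exists_wordProd_eq hw
  exact h.wordProd_apply_mem hl hβ

theorem eq_one_of_isNonneg {w : V ≃ₗᵢ[ℝ] V} (hw : w ∈ Weyl V Φ)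
    (hpos : ∀ α ∈ Δ, IsNonneg V Δ (w α)) : w = 1 := by
  obtain ⟨l, hl, rfl⟩ := h.exists_wordProd_eq hw
  exact h.wordProd_eq_one hl hpos

theorem isNonneg_of_inner_pos {x β : V} (hx : ∀ α ∈ Δ, 0 < ⟪x, α⟫) (hβ : β ∈ Φ)
    (hxβ : 0 < ⟪x, β⟫) : IsNonneg V Δ β := by
  by_contra hp
  have := inner_pos_of_isNonneg (neg_ne_zero.mpr (h.ne_zero hβ))
    ((h.isNonneg_neg_iff hβ).mpr hp) hx
  rw [inner_neg_right] at this
  linarith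

theorem eq_of_mem_image_chamber {w w' : V ≃ₗᵢ[ℝ] V} (hw : w ∈ Weyl V Φ) (hw' : w' ∈ Weyl V Φ)
    {z : V} (hz : z ∈ ⇑w '' CJ V Δ ∅) (hz' : z ∈ ⇑w' '' CJ V Δ ∅) : w = w' := by
  rw [mem_image_CJ_empty_iff] at hz hz'
  have hinner : ∀ γ, ⟪w'.symm z, γ⟫ = ⟪z, w' γ⟫ := fun γ => by
    rw [← w'.inner_map_map, w'.apply_symm_apply]
  have hu : w'⁻¹ * w = 1 := by
    refine h.eq_one_of_isNonneg (mul_mem (inv_mem hw') hw) fun α hα => ?_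
    refine h.isNonneg_of_inner_pos (fun γ hγ => (hinner γ).symm ▸ hz' γ hγ)
      (h.weyl_apply_mem (mul_mem (inv_mem hw') hw) (h.subset hα)) ?_
    rw [hinner]
    simpa using hz α hα
  exact (inv_mul_eq_one.mp hu).symm

theorem exists_Dset_subset {w₀ : V ≃ₗᵢ[ℝ] V} (hw₀ : w₀ ∈ Weyl V Φ) (J : Finset V) :
    ∃ w ∈ Weyl V Φ, ⇑w '' CJ V Δ J = ⇑w₀ '' CJ V Δ J ∧ Dset V Δ w ⊆ Δ \ J := by
  obtain ⟨l, hl, rfl⟩ := h.exists_wordProd_eq hw₀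
  clear hw₀
  induction hn : l.length using Nat.strong_induction_on generalizing l with
  | _ n ih =>
    by_cases hD : Dset V Δ (wordProd l) ⊆ Δ \ J
    · exact ⟨_, h.wordProd_mem_weyl hl, rfl, hD⟩
    -- otherwise some `α ∈ J` is a descent, and `w s_α` is shorter with the same image of `C_J`
    obtain ⟨α, hαD, hαnot⟩ := Finset.not_subset.mp hD
    obtain ⟨hα, hneg⟩ := Finset.mem_filter.mp hαD
    have hαJ : α ∈ J := by
      by_contra hαJ
      exact hαnot (Finset.mem_sdiff.mpr ⟨hα, hαJ⟩)
    obtain ⟨l', hl', hlen, hprod⟩ := h.exists_wordProd_eq_mul_sRefl hl hα hneg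
    obtain ⟨w, hw, himage, hwD⟩ := ih l'.length (hn ▸ hlen) l' hl' rfl
    exact ⟨w, hw, by rw [himage, hprod, image_CJ_mul_sRefl _ hαJ], hwD⟩

theorem eventually_mem_image_chamber {J : Finset V} {w : V ≃ₗᵢ[ℝ] V}
    (hw : w ∈ Weyl V Φ) (hD : Dset V Δ w ⊆ Δ \ J) {x y : V} (hx : x ∈ ⇑w '' CJ V Δ J)
    (hy : y ∈ CJ V Δ ∅) : ∀ᶠ t in 𝓝[>] (0 : ℝ), (1 - t) • x + t • y ∈ ⇑w '' CJ V Δ ∅ := by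
  obtain ⟨x, hx, rfl⟩ := hx
  simp_rw [mem_image_CJ_empty_iff]
  refine eventually_inner_pos_segment Δ w fun α hα => ?_
  rw [w.inner_map_map]
  by_cases hαJ : α ∈ J
  · have hwα : w α ∈ Φ := h.weyl_apply_mem hw (h.subset hα)
    have hpos : IsNonneg V Δ (w α) := (h.pos_or_neg _ hwα).resolve_right fun hneg =>
      (Finset.mem_sdiff.mp (hD (Finset.mem_filter.mpr ⟨hα, hneg⟩))).2 hαJ
    exact Or.inr ⟨hx.1 α hαJ, inner_pos_of_isNonneg (h.ne_zero hwα) hpos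
      (mem_CJ_empty_iff.mp hy)⟩
  · exact Or.inl (hx.2 α hα hαJ)

end IsRootSystem

variable (V : Type*) [NormedAddCommGroup V] [InnerProductSpace ℝ V] [FiniteDimensional ℝ V]

/-- **Uniqueness of `w_F`** (Proposition on `D(w) ⊆ col(F)`): let `F = w₀ · C_J` be a face of
the finite Coxeter complex, with color set `col(F) = Δ \\ J`.  Then there is a unique `w` in
the Weyl group with `F = w · C_J` and `D(w) ⊆ col(F)`; moreover the elements `w` satisfying
these conditions are exactly those with `w · C_∅ = F C_∅`, i.e. such that walking a small
positive distance from any point of `F` toward any point of the fundamental chamber `C_∅`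
lands in the chamber `w · C_∅`. -/
theorem unique_wF (Φ Δ : Finset V) (h : IsRootSystem V Φ Δ)
    (J : Finset V) (hJ : J ⊆ Δ) (F : Set V)
    (w₀ : V ≃ₗᵢ[ℝ] V) (hw₀ : w₀ ∈ Weyl V Φ) (hF : F = ⇑w₀ '' CJ V Δ J) :
    (∃! w : V ≃ₗᵢ[ℝ] V, w ∈ Weyl V Φ ∧ F = ⇑w '' CJ V Δ J ∧ Dset V Δ w ⊆ Δ \ J) ∧
    (∀ w : V ≃ₗᵢ[ℝ] V,
      (w ∈ Weyl V Φ ∧ F = ⇑w '' CJ V Δ J ∧ Dset V Δ w ⊆ Δ \ J) ↔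
      (w ∈ Weyl V Φ ∧ ∀ x ∈ F, ∀ y ∈ CJ V Δ (∅ : Finset V),
        ∃ ε > (0 : ℝ), ∀ t ∈ Set.Ioo (0 : ℝ) ε,
          ((1 - t) • x + t • y) ∈ ⇑w '' CJ V Δ (∅ : Finset V))) := by
  obtain ⟨w₁, hw₁, hw₁F, hw₁D⟩ := h.exists_Dset_subset hw₀ J
  obtain ⟨x, hx⟩ := CJ_nonempty h.indep hJ
  obtain ⟨y, hy⟩ := CJ_nonempty h.indep (Finset.empty_subset Δ)
  have hxF : w₀ x ∈ F := hF ▸ Set.mem_image_of_mem w₀ hx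
  have hP₁ : w₁ ∈ Weyl V Φ ∧ F = ⇑w₁ '' CJ V Δ J ∧ Dset V Δ w₁ ⊆ Δ \ J :=
    ⟨hw₁, hF.trans hw₁F.symm, hw₁D⟩
  have walk : ∀ {w}, w ∈ Weyl V Φ ∧ F = ⇑w '' CJ V Δ J ∧ Dset V Δ w ⊆ Δ \ J →
      ∀ x ∈ F, ∀ y ∈ CJ V Δ ∅, ∀ᶠ t in 𝓝[>] (0 : ℝ), (1 - t) • x + t • y ∈ ⇑w '' CJ V Δ ∅ :=
    fun ⟨hw, hwF, hwD⟩ x hx y hy => h.eventually_mem_image_chamber hw hwD (hwF ▸ hx) hy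
  have eq_w₁ : ∀ {w}, w ∈ Weyl V Φ →
      (∀ᶠ t in 𝓝[>] (0 : ℝ), (1 - t) • w₀ x + t • y ∈ ⇑w '' CJ V Δ ∅) → w = w₁ :=
    fun hw hev =>
      let ⟨_, ht, ht₁⟩ := (hev.and (walk hP₁ _ hxF y hy)).exists
      h.eq_of_mem_image_chamber hw hw₁ ht ht₁
  refine ⟨⟨w₁, hP₁, fun w hw => eq_w₁ hw.1 (walk hw _ hxF y hy)⟩, fun w => ⟨fun hw => ?_, ?_⟩⟩
  · exact ⟨hw.1, fun x hx y hy => mem_nhdsGT_iff_exists_Ioo_subset.mp (walk hw x hx y hy)⟩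
  · rintro ⟨hw, hQ⟩
    rw [eq_w₁ hw (mem_nhdsGT_iff_exists_Ioo_subset.mpr (hQ _ hxF y hy))]
    exact hP₁
end

section
/- Given a partition of a finite set I of size n into nonempty blocks and a cyclic order on the blocks, the set of labelings making it a spin necklace is in bijection with Z/nZ: any single edge label determines all others uniquely, and every choice of one label extends to a valid labeling. -/
/-- Given a partition of `Fin n` into `m` nonempty blocks with a cyclic order (blocks
indexed by `ZMod m`), a **valid labeling** assigns to each edge of the cycle a label in
`{1,…,n}` (`lab i` labels the edge from block `i` to block `i+1`) such that the outgoing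
label of each block is congruent mod `n` to its incoming label plus the size of the
block; this is exactly the data making the partition a spin necklace. -/
def ValidLab (n m : ℕ) (B : ZMod m → Finset (Fin n)) (lab : ZMod m → ℕ) : Prop :=
  (∀ i, 1 ≤ lab i ∧ lab i ≤ n) ∧
    ∀ i, lab (i + 1) % n = (lab i + (B (i + 1)).card) % n

/-!
Read in `ZMod n`, a valid labeling is a function `f` on the cycle `ZMod m` with prescribed
increments `f (i + 1) - f i = |B (i + 1)|`. Such a function is determined by `f 0`, and it
exists for every value of `f 0` exactly when the increments sum to zero around the cycle;
here they sum to `n = 0` because the blocks partition `Fin n`.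
-/

open Finset Function

section CyclicRecurrence

theorem ZMod.eq_apply_zero_of_forall_apply_add_one_eq {α : Type*} {m : ℕ} {d : ZMod m → α}
    (hd : ∀ i, d (i + 1) = d i) (i : ZMod m) : d i = d 0 := by
  have hper : Periodic d 1 := hd
  rw [← ZMod.intCast_zmod_cast i, ← zsmul_one]
  exact hper.zsmul_eq _

theorem ZMod.eq_of_increments_eq {G : Type*} [AddGroup G] {m : ℕ} {c f g : ZMod m → G} (hf : ∀ i, f (i + 1) = f i + c (i + 1))
    (hg : ∀ i, g (i + 1) = g i + c (i + 1)) (h0 : f 0 = g 0) : f = g := by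
  funext i
  have hdiff := ZMod.eq_apply_zero_of_forall_apply_add_one_eq (d := f - g)
    (fun j => by simp only [Pi.sub_apply, hf, hg, add_sub_add_right_eq_sub]) i
  rwa [Pi.sub_apply, Pi.sub_apply, h0, sub_self, sub_eq_zero] at hdiff

theorem ZMod.sum_range_natCast {M : Type*} [AddCommMonoid M] {m : ℕ} [NeZero m]
    (g : ZMod m → M) :
    ∑ j ∈ range m, g j = ∑ x, g x :=
  Finset.sum_nbij' (fun j => (j : ZMod m)) ZMod.val (fun _ _ => mem_univ _)
    (fun x _ => mem_range.mpr x.val_lt)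
    (fun _ hj => ZMod.val_cast_of_lt (mem_range.mp hj))
    (fun x _ => ZMod.natCast_zmod_val x) (fun _ _ => rfl)

variable {G : Type*} [AddCommGroup G] {m : ℕ}

theorem ZMod.exists_increments_eq [NeZero m] {c : ZMod m → G} (hc : ∑ i, c i = 0) (a : G) :
    ∃ f : ZMod m → G, f 0 = a ∧ ∀ i, f (i + 1) = f i + c (i + 1) := by
  set F : ℕ → G := fun k => a + ∑ j ∈ range k, c (j + 1)
  have hF : ∀ k, F (k + 1) = F k + c (k + 1) := fun k => by
    simp only [F, sum_range_succ, add_assoc]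
  have hper : Periodic F m := fun k => by
    have hwrap : ∑ j ∈ range m, c ((k + j : ℕ) + 1) = 0 := by
      simp only [Nat.cast_add, add_right_comm _ _ (1 : ZMod m)]
      rw [ZMod.sum_range_natCast (fun x : ZMod m => c ((k : ZMod m) + 1 + x))]
      exact (Equiv.sum_comp (Equiv.addLeft _) c).trans hc
    simp only [F, sum_range_add, hwrap, add_zero]
  refine ⟨fun i => F i.val, by simp [F], fun i => ?_⟩
  calc F (i + 1).val = F (i.val + 1) := by
        rw [← hper.map_mod_nat (i.val + 1), ← ZMod.val_natCast, Nat.cast_add, Nat.cast_one,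
          ZMod.natCast_zmod_val]
    _ = F i.val + c (i + 1) := by rw [hF, ZMod.natCast_zmod_val]

theorem ZMod.bijective_eval_zero_of_sum_eq_zero [NeZero m] {c : ZMod m → G}
    (hc : ∑ i, c i = 0) :
    Bijective (fun f : {f : ZMod m → G // ∀ i, f (i + 1) = f i + c (i + 1)} => f.1 0) :=
  ⟨fun f g h => Subtype.ext (ZMod.eq_of_increments_eq f.2 g.2 h), fun a =>
    let ⟨f, h0, hf⟩ := ZMod.exists_increments_eq hc a
    ⟨⟨f, hf⟩, h0⟩⟩

end CyclicRecurrence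

section Labels

variable {n : ℕ}

/-- The representative of `x : ZMod n` in `{1, …, n}`. -/
def ZMod.posRep (x : ZMod n) : ℕ := (x - 1).val + 1

theorem ZMod.natCast_posRep [NeZero n] (x : ZMod n) : ((x.posRep : ℕ) : ZMod n) = x := by
  simp [ZMod.posRep]

theorem ZMod.posRep_natCast {a : ℕ} (h1 : 1 ≤ a) (h2 : a ≤ n) : (a : ZMod n).posRep = a := by
  obtain ⟨b, rfl⟩ : ∃ b, a = b + 1 := ⟨a - 1, by omega⟩
  simp [ZMod.posRep, ZMod.val_cast_of_lt (by omega : b < n)]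

theorem ZMod.one_le_posRep (x : ZMod n) : 1 ≤ x.posRep := Nat.le_add_left 1 _

theorem ZMod.posRep_le [NeZero n] (x : ZMod n) : x.posRep ≤ n := (x - 1).val_lt

def validLabEquiv (n m : ℕ) [NeZero n] (B : ZMod m → Finset (Fin n)) :
    {lab // ValidLab n m B lab} ≃
      {f : ZMod m → ZMod n // ∀ i, f (i + 1) = f i + (B (i + 1)).card} where
  toFun lab := ⟨fun i => lab.1 i, fun i => by
    have h := lab.2.2 i
    rwa [← ZMod.natCast_eq_natCast_iff', Nat.cast_add] at h⟩
  invFun f := ⟨fun i => (f.1 i).posRep, fun i => ⟨ZMod.one_le_posRep _, ZMod.posRep_le _⟩,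
    fun i => by
      rw [← ZMod.natCast_eq_natCast_iff', Nat.cast_add, ZMod.natCast_posRep, ZMod.natCast_posRep]
      exact f.2 i⟩
  left_inv lab := Subtype.ext (funext fun i => ZMod.posRep_natCast (lab.2.1 i).1 (lab.2.1 i).2)
  right_inv f := Subtype.ext (funext fun i => ZMod.natCast_posRep _)

end Labels

theorem Finset.sum_card_eq_card_of_pairwise_disjoint {ι α : Type*} [Fintype ι] [Fintype α]
    [DecidableEq α] {B : ι → Finset α} (hdisj : Pairwise (Disjoint on B))
    (hcov : ∀ x, ∃ i, x ∈ B i) : ∑ i, (B i).card = Fintype.card α := by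
  rw [← card_biUnion fun i _ j _ h => hdisj h, ← card_univ]
  congr
  ext x
  simpa using hcov x

theorem validLab_equiv_zmod_general (n m : ℕ) (hn : 0 < n) (hm : 0 < m)
    (B : ZMod m → Finset (Fin n))
    (hdisj : ∀ i j, i ≠ j → Disjoint (B i) (B j))
    (hcov : ∀ x : Fin n, ∃ i, x ∈ B i) :
    Function.Bijective
      (fun lab : {lab : ZMod m → ℕ // ValidLab n m B lab} =>
        ((lab.1 0 : ℕ) : ZMod n)) := by
  have : NeZero m := ⟨hm.ne'⟩
  have : NeZero n := ⟨hn.ne'⟩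
  have hsum : ∑ i, ((B i).card : ZMod n) = 0 := by
    rw [← Nat.cast_sum, sum_card_eq_card_of_pairwise_disjoint (fun i j => hdisj i j) hcov,
      Fintype.card_fin, ZMod.natCast_self]
  exact (ZMod.bijective_eval_zero_of_sum_eq_zero hsum).comp (validLabEquiv n m B).bijective

/-- **Labelings of a necklace are a `ZMod n`-torsor.** Given a partition of a set of size
`n` into nonempty blocks with a cyclic order, the valid spin-necklace labelings are in
bijection with `ZMod n` via the label of a fixed edge: any single edge label determines all
others uniquely, and every residue arises as the label of that edge. -/
theorem validLab_equiv_zmod (n m : ℕ) (hn : 0 < n) (hm : 0 < m)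
    (B : ZMod m → Finset (Fin n))
    (hne : ∀ i, (B i).Nonempty)
    (hdisj : ∀ i j, i ≠ j → Disjoint (B i) (B j))
    (hcov : ∀ x : Fin n, ∃ i, x ∈ B i) :
    Function.Bijective
      (fun lab : {lab : ZMod m → ℕ // ValidLab n m B lab} =>
        ((lab.1 0 : ℕ) : ZMod n)) :=
  validLab_equiv_zmod_general n m hn hm B hdisj hcov
end
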